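/- arXiv:1912.05512 — 2 statements merged into one kernel-verified Lean document; each statement's English description precedes it below -/
import Mathlib

section
/- Let G be a group generated by involutions ρ_0, …, ρ_{n−1} satisfying the string property (ρ_i ρ_j = ρ_j ρ_i whenever j − i > 1) and such that: (i) the subgroups ⟨ρ_0,…,ρ_{n−2}⟩ and ⟨ρ_1,…,ρ_{n−1}⟩, with these generating sequences, are both string C-group representations, and (ii) ⟨ρ_0,…,ρ_{n−2}⟩ ∩ ⟨ρ_1,…,ρ_{n−1}⟩ = ⟨ρ_1,…,ρ_{n−2}⟩. Then (G; {ρ_0,…,ρ_{n−1}}) is a string C-group representation of rank n. -/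
open QuadraticMap

section StringC

variable {G : Type*} [Group G]

/-- `ρ_0, …, ρ_{n-1}` is a sequence of involutions satisfying the string property and
the intersection property; equivalently, it is a string C-group representation of the
subgroup it generates. -/
def IsStringCSystem {n : ℕ} (ρ : Fin n → G) : Prop :=
  (∀ i, ρ i * ρ i = 1 ∧ ρ i ≠ 1) ∧
  (∀ i j : Fin n, (i : ℕ) + 1 < (j : ℕ) → ρ i * ρ j = ρ j * ρ i) ∧
  (∀ I J : Set (Fin n),
    Subgroup.closure (ρ '' I) ⊓ Subgroup.closure (ρ '' J) =
      Subgroup.closure (ρ '' (I ∩ J)))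

/-- A string C-group representation of `G` of rank `n`: a generating sequence of `n`
involutions satisfying the string property and the intersection property. -/
def IsStringCGroupRep {n : ℕ} (ρ : Fin n → G) : Prop :=
  IsStringCSystem ρ ∧ Subgroup.closure (Set.range ρ) = ⊤

end StringC

private lemma commClosure {G : Type*} [Group G] {S₁ S₂ : Set G}
    (h : ∀ a ∈ S₁, ∀ b ∈ S₂, a * b = b * a) :
    ∀ a ∈ Subgroup.closure S₁, ∀ b ∈ Subgroup.closure S₂, a * b = b * a := by
  have h2 : Subgroup.closure S₂ ≤ Subgroup.centralizer S₁ :=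
    (Subgroup.closure_le _).mpr (fun b hb => Subgroup.mem_centralizer_iff.mpr
      (fun a ha => h a ha b hb))
  have h1 : Subgroup.closure S₁ ≤ Subgroup.centralizer (Subgroup.closure S₂ : Set G) :=
    (Subgroup.closure_le _).mpr (fun a ha => Subgroup.mem_centralizer_iff.mpr
      (fun b hb => (Subgroup.mem_centralizer_iff.mp (h2 hb) a ha).symm))
  intro a ha b hb
  exact (Subgroup.mem_centralizer_iff.mp (h1 ha) b hb).symm

private lemma commSplit {G : Type*} [Group G] {S₁ S₂ : Set G}
    (h : ∀ a ∈ S₁, ∀ b ∈ S₂, a * b = b * a) {x : G}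
    (hx : x ∈ Subgroup.closure (S₁ ∪ S₂)) :
    ∃ a ∈ Subgroup.closure S₁, ∃ b ∈ Subgroup.closure S₂, x = a * b := by
  have hc := commClosure h
  induction hx using Subgroup.closure_induction with
  | mem y hy =>
    rcases hy with hy | hy
    · exact ⟨y, Subgroup.subset_closure hy, 1, one_mem _, (mul_one y).symm⟩
    · exact ⟨1, one_mem _, y, Subgroup.subset_closure hy, (one_mul y).symm⟩
  | one => exact ⟨1, one_mem _, 1, one_mem _, (one_mul 1).symm⟩
  | mul y z hy hz ihy ihz =>
    obtain ⟨a₁, ha₁, b₁, hb₁, rfl⟩ := ihy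
    obtain ⟨a₂, ha₂, b₂, hb₂, rfl⟩ := ihz
    refine ⟨a₁ * a₂, mul_mem ha₁ ha₂, b₁ * b₂, mul_mem hb₁ hb₂, ?_⟩
    have hcm := hc a₂ ha₂ b₁ hb₁
    calc a₁ * b₁ * (a₂ * b₂) = a₁ * (b₁ * a₂ * b₂) := by group
      _ = a₁ * (a₂ * b₁ * b₂) := by rw [← hcm]
      _ = a₁ * a₂ * (b₁ * b₂) := by group
  | inv y hy ihy =>
    obtain ⟨a, ha, b, hb, rfl⟩ := ihy
    refine ⟨a⁻¹, inv_mem ha, b⁻¹, inv_mem hb, ?_⟩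
    rw [mul_inv_rev]
    exact (hc a⁻¹ (inv_mem ha) b⁻¹ (inv_mem hb)).symm

private lemma interOfComp {G : Type*} [Group G] {n m : ℕ} (ρ : Fin n → G) (e : Fin m → Fin n)
    (h : ∀ I J : Set (Fin m),
      Subgroup.closure ((fun i => ρ (e i)) '' I) ⊓ Subgroup.closure ((fun i => ρ (e i)) '' J) =
        Subgroup.closure ((fun i => ρ (e i)) '' (I ∩ J)))
    {I J : Set (Fin n)} (hI : I ⊆ Set.range e) (hJ : J ⊆ Set.range e) :
    Subgroup.closure (ρ '' I) ⊓ Subgroup.closure (ρ '' J) = Subgroup.closure (ρ '' (I ∩ J)) := by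
  have him : ∀ K : Set (Fin n), K ⊆ Set.range e →
      (fun i => ρ (e i)) '' (e ⁻¹' K) = ρ '' K := by
    intro K hK
    rw [show (fun i => ρ (e i)) = ρ ∘ e from rfl, Set.image_comp,
      Set.image_preimage_eq_inter_range, Set.inter_eq_self_of_subset_left hK]
  have key := h (e ⁻¹' I) (e ⁻¹' J)
  rw [him I hI, him J hJ, ← Set.preimage_inter,
    him (I ∩ J) (fun i hi => hI hi.1)] at key
  exact key

/-- Lemma 3.1: if both `⟨ρ_0,…,ρ_{n-2}⟩` and `⟨ρ_1,…,ρ_{n-1}⟩` are string C-groups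
and they intersect in `⟨ρ_1,…,ρ_{n-2}⟩`, then `(G; {ρ_0,…,ρ_{n-1}})` is a string
C-group representation. -/
theorem statement12 {G : Type*} [Group G] (n : ℕ) (hn : 2 ≤ n) (ρ : Fin n → G)
    (hinv : ∀ i, ρ i * ρ i = 1 ∧ ρ i ≠ 1)
    (hgen : Subgroup.closure (Set.range ρ) = ⊤)
    (hstring : ∀ i j : Fin n, (i : ℕ) + 1 < (j : ℕ) → ρ i * ρ j = ρ j * ρ i)
    (hL : IsStringCSystem (fun i : Fin (n - 1) => ρ ⟨(i : ℕ), by have := i.isLt; omega⟩))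
    (hR : IsStringCSystem (fun i : Fin (n - 1) => ρ ⟨(i : ℕ) + 1, by have := i.isLt; omega⟩))
    (hcap : Subgroup.closure (ρ '' {i : Fin n | (i : ℕ) ≤ n - 2}) ⊓
        Subgroup.closure (ρ '' {i : Fin n | 1 ≤ (i : ℕ)}) =
        Subgroup.closure (ρ '' {i : Fin n | 1 ≤ (i : ℕ) ∧ (i : ℕ) ≤ n - 2})) :
    IsStringCGroupRep ρ := by
  classical
  refine ⟨⟨hinv, hstring, ?_⟩, hgen⟩
  have mono : ∀ {I J : Set (Fin n)}, I ⊆ J →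
      Subgroup.closure (ρ '' I) ≤ Subgroup.closure (ρ '' J) :=
    fun h => Subgroup.closure_mono (Set.image_mono h)
  have triv : ∀ I J : Set (Fin n),
      Subgroup.closure (ρ '' (I ∩ J)) ≤ Subgroup.closure (ρ '' I) ⊓ Subgroup.closure (ρ '' J) :=
    fun I J => le_inf (mono Set.inter_subset_left) (mono Set.inter_subset_right)
  -- intersection property transported from the left subgroup
  have L1 : ∀ I J : Set (Fin n), (∀ i ∈ I, (i : ℕ) ≤ n - 2) → (∀ i ∈ J, (i : ℕ) ≤ n - 2) →
      Subgroup.closure (ρ '' I) ⊓ Subgroup.closure (ρ '' J) =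
        Subgroup.closure (ρ '' (I ∩ J)) := by
    intro I J hI hJ
    refine interOfComp ρ (fun i : Fin (n - 1) => (⟨(i : ℕ), by have := i.isLt; omega⟩ : Fin n))
      (fun P Q => hL.2.2 P Q) ?_ ?_
    · intro j hj
      exact ⟨⟨(j : ℕ), by have := hI j hj; omega⟩, Fin.ext rfl⟩
    · intro j hj
      exact ⟨⟨(j : ℕ), by have := hJ j hj; omega⟩, Fin.ext rfl⟩
  have L2 : ∀ I J : Set (Fin n), (∀ i ∈ I, 1 ≤ (i : ℕ)) → (∀ i ∈ J, 1 ≤ (i : ℕ)) →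
      Subgroup.closure (ρ '' I) ⊓ Subgroup.closure (ρ '' J) =
        Subgroup.closure (ρ '' (I ∩ J)) := by
    intro I J hI hJ
    refine interOfComp ρ (fun i : Fin (n - 1) => (⟨(i : ℕ) + 1, by have := i.isLt; omega⟩ : Fin n))
      (fun P Q => hR.2.2 P Q) ?_ ?_
    · intro j hj
      refine ⟨⟨(j : ℕ) - 1, by have := j.isLt; have := hI j hj; omega⟩, Fin.ext ?_⟩
      have := hI j hj
      show (j : ℕ) - 1 + 1 = (j : ℕ)
      omega
    · intro j hj
      refine ⟨⟨(j : ℕ) - 1, by have := j.isLt; have := hJ j hj; omega⟩, Fin.ext ?_⟩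
      have := hJ j hj
      show (j : ℕ) - 1 + 1 = (j : ℕ)
      omega
  have hcap' : ∀ x : G, x ∈ Subgroup.closure (ρ '' {i : Fin n | (i : ℕ) ≤ n - 2}) →
      x ∈ Subgroup.closure (ρ '' {i : Fin n | 1 ≤ (i : ℕ)}) →
      x ∈ Subgroup.closure (ρ '' {i : Fin n | 1 ≤ (i : ℕ) ∧ (i : ℕ) ≤ n - 2}) := by
    intro x h1 h2
    rw [← hcap]
    exact Subgroup.mem_inf.mpr ⟨h1, h2⟩
  -- sub1 : I avoiding 0, intersected with the left parabolic
  have sub1 : ∀ I : Set (Fin n), (∀ i ∈ I, 1 ≤ (i : ℕ)) →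
      Subgroup.closure (ρ '' I) ⊓ Subgroup.closure (ρ '' {i : Fin n | (i : ℕ) ≤ n - 2}) =
        Subgroup.closure (ρ '' (I ∩ {i : Fin n | (i : ℕ) ≤ n - 2})) := by
    intro I hI
    refine le_antisymm ?_ (triv _ _)
    intro x hx
    rw [Subgroup.mem_inf] at hx
    obtain ⟨hxI, hxL⟩ := hx
    have hxR : x ∈ Subgroup.closure (ρ '' {i : Fin n | 1 ≤ (i : ℕ)}) :=
      mono (fun i hi => hI i hi) hxI
    have hxM := hcap' x hxL hxR
    have hmem : x ∈ Subgroup.closure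
        (ρ '' (I ∩ {i : Fin n | 1 ≤ (i : ℕ) ∧ (i : ℕ) ≤ n - 2})) := by
      rw [← L2 I _ hI (fun i hi => hi.1)]
      exact Subgroup.mem_inf.mpr ⟨hxI, hxM⟩
    refine mono ?_ hmem
    rintro i ⟨h1, h2⟩
    exact ⟨h1, h2.2⟩
  -- sub2 : I avoiding n-1, intersected with the right parabolic
  have sub2 : ∀ I : Set (Fin n), (∀ i ∈ I, (i : ℕ) ≤ n - 2) →
      Subgroup.closure (ρ '' I) ⊓ Subgroup.closure (ρ '' {i : Fin n | 1 ≤ (i : ℕ)}) =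
        Subgroup.closure (ρ '' (I ∩ {i : Fin n | 1 ≤ (i : ℕ)})) := by
    intro I hI
    refine le_antisymm ?_ (triv _ _)
    intro x hx
    rw [Subgroup.mem_inf] at hx
    obtain ⟨hxI, hxR⟩ := hx
    have hxL : x ∈ Subgroup.closure (ρ '' {i : Fin n | (i : ℕ) ≤ n - 2}) :=
      mono (fun i hi => hI i hi) hxI
    have hxM := hcap' x hxL hxR
    have hmem : x ∈ Subgroup.closure
        (ρ '' (I ∩ {i : Fin n | 1 ≤ (i : ℕ) ∧ (i : ℕ) ≤ n - 2})) := by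
      rw [← L1 I _ hI (fun i hi => hi.2)]
      exact Subgroup.mem_inf.mpr ⟨hxI, hxM⟩
    refine mono ?_ hmem
    rintro i ⟨h1, h2⟩
    exact ⟨h1, h2.1⟩
  -- splitting across a missing index
  have split : ∀ (I : Set (Fin n)) (k : Fin n), k ∉ I →
      ∀ x ∈ Subgroup.closure (ρ '' I),
      ∃ a ∈ Subgroup.closure (ρ '' (I ∩ {i : Fin n | (i : ℕ) < (k : ℕ)})),
      ∃ b ∈ Subgroup.closure (ρ '' (I ∩ {i : Fin n | (k : ℕ) < (i : ℕ)})), x = a * b := by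
    intro I k hk x hx
    have hIU : I = (I ∩ {i : Fin n | (i : ℕ) < (k : ℕ)}) ∪
        (I ∩ {i : Fin n | (k : ℕ) < (i : ℕ)}) := by
      ext i
      constructor
      · intro hi
        rcases lt_trichotomy (i : ℕ) (k : ℕ) with h | h | h
        · exact Or.inl ⟨hi, h⟩
        · exact absurd (by rw [← Fin.ext h]; exact hi) hk
        · exact Or.inr ⟨hi, h⟩
      · rintro (⟨hi, -⟩ | ⟨hi, -⟩) <;> exact hi
    have hU : ρ '' I = ρ '' (I ∩ {i : Fin n | (i : ℕ) < (k : ℕ)}) ∪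
        ρ '' (I ∩ {i : Fin n | (k : ℕ) < (i : ℕ)}) := by
      conv_lhs => rw [hIU]
      rw [Set.image_union]
    have hcomm : ∀ a ∈ ρ '' (I ∩ {i : Fin n | (i : ℕ) < (k : ℕ)}),
        ∀ b ∈ ρ '' (I ∩ {i : Fin n | (k : ℕ) < (i : ℕ)}), a * b = b * a := by
      rintro a ⟨i, ⟨-, hi⟩, rfl⟩ b ⟨j, ⟨-, hj⟩, rfl⟩
      have h1 : (i : ℕ) < (k : ℕ) := hi
      have h2 : (k : ℕ) < (j : ℕ) := hj
      exact hstring i j (by omega)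
    exact commSplit hcomm (hU ▸ hx)
  -- star lemma, left version
  have starL : ∀ I : Set (Fin n),
      Subgroup.closure (ρ '' I) ⊓ Subgroup.closure (ρ '' {i : Fin n | (i : ℕ) ≤ n - 2}) =
        Subgroup.closure (ρ '' (I ∩ {i : Fin n | (i : ℕ) ≤ n - 2})) := by
    intro I
    by_cases hI1 : ∀ i ∈ I, (i : ℕ) ≤ n - 2
    · rw [Set.inter_eq_self_of_subset_left
        (show I ⊆ {i : Fin n | (i : ℕ) ≤ n - 2} from fun i hi => hI1 i hi)]
      exact inf_eq_left.mpr (mono (show I ⊆ {i : Fin n | (i : ℕ) ≤ n - 2} from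
        fun i hi => hI1 i hi))
    by_cases hI0 : ∀ i ∈ I, 1 ≤ (i : ℕ)
    · exact sub1 I hI0
    push_neg at hI0 hI1
    obtain ⟨i0, hi0I, hi0⟩ := hI0
    obtain ⟨j, hjI, hj⟩ := hI1
    by_cases hIu : ∃ k, k ∉ I
    · obtain ⟨k, hk⟩ := hIu
      have hk0 : 1 ≤ (k : ℕ) := by
        by_contra h
        push_neg at h
        exact hk (by rw [Fin.ext (by omega : (k : ℕ) = (i0 : ℕ))]; exact hi0I)
      have hkt : (k : ℕ) ≤ n - 2 := by
        by_contra h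
        push_neg at h
        have := k.isLt
        have := j.isLt
        exact hk (by rw [Fin.ext (by omega : (k : ℕ) = (j : ℕ))]; exact hjI)
      refine le_antisymm ?_ (triv _ _)
      intro x hx
      rw [Subgroup.mem_inf] at hx
      obtain ⟨hxI, hxL⟩ := hx
      obtain ⟨a, ha, b, hb, rfl⟩ := split I k hk x hxI
      have hASl : (I ∩ {i : Fin n | (i : ℕ) < (k : ℕ)}) ⊆ {i : Fin n | (i : ℕ) ≤ n - 2} := by
        intro i hi
        have h2 : (i : ℕ) < (k : ℕ) := hi.2
        show (i : ℕ) ≤ n - 2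
        omega
      have haL : a ∈ Subgroup.closure (ρ '' {i : Fin n | (i : ℕ) ≤ n - 2}) := mono hASl ha
      have hbL := mul_mem (inv_mem haL) hxL
      rw [inv_mul_cancel_left] at hbL
      have hB1 : ∀ i ∈ (I ∩ {i : Fin n | (k : ℕ) < (i : ℕ)}), 1 ≤ (i : ℕ) := by
        intro i hi
        have h2 : (k : ℕ) < (i : ℕ) := hi.2
        omega
      have hb2 : b ∈ Subgroup.closure
          (ρ '' ((I ∩ {i : Fin n | (k : ℕ) < (i : ℕ)}) ∩ {i : Fin n | (i : ℕ) ≤ n - 2})) := by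
        rw [← sub1 _ hB1]
        exact Subgroup.mem_inf.mpr ⟨hb, hbL⟩
      refine mul_mem (mono ?_ ha) (mono ?_ hb2)
      · exact fun i hi => ⟨hi.1, hASl hi⟩
      · exact fun i hi => ⟨hi.1.1, hi.2⟩
    · push_neg at hIu
      rw [Set.eq_univ_of_forall hIu, Set.univ_inter]
      exact inf_eq_right.mpr (mono (Set.subset_univ _))
  -- star lemma, right version
  have starR : ∀ I : Set (Fin n),
      Subgroup.closure (ρ '' I) ⊓ Subgroup.closure (ρ '' {i : Fin n | 1 ≤ (i : ℕ)}) =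
        Subgroup.closure (ρ '' (I ∩ {i : Fin n | 1 ≤ (i : ℕ)})) := by
    intro I
    by_cases hI0 : ∀ i ∈ I, 1 ≤ (i : ℕ)
    · rw [Set.inter_eq_self_of_subset_left
        (show I ⊆ {i : Fin n | 1 ≤ (i : ℕ)} from fun i hi => hI0 i hi)]
      exact inf_eq_left.mpr (mono (show I ⊆ {i : Fin n | 1 ≤ (i : ℕ)} from
        fun i hi => hI0 i hi))
    by_cases hI1 : ∀ i ∈ I, (i : ℕ) ≤ n - 2
    · exact sub2 I hI1
    push_neg at hI0 hI1
    obtain ⟨i0, hi0I, hi0⟩ := hI0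
    obtain ⟨j, hjI, hj⟩ := hI1
    by_cases hIu : ∃ k, k ∉ I
    · obtain ⟨k, hk⟩ := hIu
      have hk0 : 1 ≤ (k : ℕ) := by
        by_contra h
        push_neg at h
        exact hk (by rw [Fin.ext (by omega : (k : ℕ) = (i0 : ℕ))]; exact hi0I)
      have hkt : (k : ℕ) ≤ n - 2 := by
        by_contra h
        push_neg at h
        have := k.isLt
        have := j.isLt
        exact hk (by rw [Fin.ext (by omega : (k : ℕ) = (j : ℕ))]; exact hjI)
      refine le_antisymm ?_ (triv _ _)
      intro x hx
      rw [Subgroup.mem_inf] at hx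
      obtain ⟨hxI, hxR⟩ := hx
      obtain ⟨a, ha, b, hb, rfl⟩ := split I k hk x hxI
      have hBSr : (I ∩ {i : Fin n | (k : ℕ) < (i : ℕ)}) ⊆ {i : Fin n | 1 ≤ (i : ℕ)} := by
        intro i hi
        have h2 : (k : ℕ) < (i : ℕ) := hi.2
        show 1 ≤ (i : ℕ)
        omega
      have hbR : b ∈ Subgroup.closure (ρ '' {i : Fin n | 1 ≤ (i : ℕ)}) := mono hBSr hb
      have haR := mul_mem hxR (inv_mem hbR)
      rw [mul_inv_cancel_right] at haR
      have hA1 : ∀ i ∈ (I ∩ {i : Fin n | (i : ℕ) < (k : ℕ)}), (i : ℕ) ≤ n - 2 := by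
        intro i hi
        have h2 : (i : ℕ) < (k : ℕ) := hi.2
        omega
      have ha2 : a ∈ Subgroup.closure
          (ρ '' ((I ∩ {i : Fin n | (i : ℕ) < (k : ℕ)}) ∩ {i : Fin n | 1 ≤ (i : ℕ)})) := by
        rw [← sub2 _ hA1]
        exact Subgroup.mem_inf.mpr ⟨ha, haR⟩
      refine mul_mem (mono ?_ ha2) (mono ?_ hb)
      · exact fun i hi => ⟨hi.1.1, hi.2⟩
      · exact fun i hi => ⟨hi.1, hBSr hi⟩
    · push_neg at hIu
      rw [Set.eq_univ_of_forall hIu, Set.univ_inter]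
      exact inf_eq_right.mpr (mono (Set.subset_univ _))
  -- good pairs
  have goodL : ∀ I J : Set (Fin n), (∀ j ∈ J, (j : ℕ) ≤ n - 2) →
      Subgroup.closure (ρ '' I) ⊓ Subgroup.closure (ρ '' J) =
        Subgroup.closure (ρ '' (I ∩ J)) := by
    intro I J hJ
    refine le_antisymm ?_ (triv _ _)
    intro x hx
    rw [Subgroup.mem_inf] at hx
    obtain ⟨hxI, hxJ⟩ := hx
    have hxL : x ∈ Subgroup.closure (ρ '' {i : Fin n | (i : ℕ) ≤ n - 2}) :=
      mono (fun i hi => hJ i hi) hxJ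
    have h1 : x ∈ Subgroup.closure (ρ '' (I ∩ {i : Fin n | (i : ℕ) ≤ n - 2})) := by
      rw [← starL I]
      exact Subgroup.mem_inf.mpr ⟨hxI, hxL⟩
    have h2 : x ∈ Subgroup.closure (ρ '' ((I ∩ {i : Fin n | (i : ℕ) ≤ n - 2}) ∩ J)) := by
      rw [← L1 _ _ (fun i hi => hi.2) hJ]
      exact Subgroup.mem_inf.mpr ⟨h1, hxJ⟩
    refine mono ?_ h2
    rintro i ⟨⟨hiI, -⟩, hiJ⟩
    exact ⟨hiI, hiJ⟩
  have goodR : ∀ I J : Set (Fin n), (∀ j ∈ J, 1 ≤ (j : ℕ)) →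
      Subgroup.closure (ρ '' I) ⊓ Subgroup.closure (ρ '' J) =
        Subgroup.closure (ρ '' (I ∩ J)) := by
    intro I J hJ
    refine le_antisymm ?_ (triv _ _)
    intro x hx
    rw [Subgroup.mem_inf] at hx
    obtain ⟨hxI, hxJ⟩ := hx
    have hxR : x ∈ Subgroup.closure (ρ '' {i : Fin n | 1 ≤ (i : ℕ)}) :=
      mono (fun i hi => hJ i hi) hxJ
    have h1 : x ∈ Subgroup.closure (ρ '' (I ∩ {i : Fin n | 1 ≤ (i : ℕ)})) := by
      rw [← starR I]
      exact Subgroup.mem_inf.mpr ⟨hxI, hxR⟩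
    have h2 : x ∈ Subgroup.closure (ρ '' ((I ∩ {i : Fin n | 1 ≤ (i : ℕ)}) ∩ J)) := by
      rw [← L2 _ _ (fun i hi => hi.2) hJ]
      exact Subgroup.mem_inf.mpr ⟨h1, hxJ⟩
    refine mono ?_ h2
    rintro i ⟨⟨hiI, -⟩, hiJ⟩
    exact ⟨hiI, hiJ⟩
  -- main argument
  intro I J
  by_cases hJ1 : ∀ j ∈ J, (j : ℕ) ≤ n - 2
  · exact goodL I J hJ1
  by_cases hI1 : ∀ i ∈ I, (i : ℕ) ≤ n - 2
  · rw [inf_comm, Set.inter_comm]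
    exact goodL J I hI1
  by_cases hJ0 : ∀ j ∈ J, 1 ≤ (j : ℕ)
  · exact goodR I J hJ0
  by_cases hI0 : ∀ i ∈ I, 1 ≤ (i : ℕ)
  · rw [inf_comm, Set.inter_comm]
    exact goodR J I hI0
  push_neg at hI0 hI1
  obtain ⟨i0, hi0I, hi0⟩ := hI0
  obtain ⟨j0, hj0I, hj0⟩ := hI1
  by_cases hIu : ∃ k, k ∉ I
  · obtain ⟨k, hk⟩ := hIu
    have hk0 : 1 ≤ (k : ℕ) := by
      by_contra h
      push_neg at h
      exact hk (by rw [Fin.ext (by omega : (k : ℕ) = (i0 : ℕ))]; exact hi0I)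
    have hkt : (k : ℕ) ≤ n - 2 := by
      by_contra h
      push_neg at h
      have := k.isLt
      have := j0.isLt
      exact hk (by rw [Fin.ext (by omega : (k : ℕ) = (j0 : ℕ))]; exact hj0I)
    refine le_antisymm ?_ (triv _ _)
    intro x hx
    rw [Subgroup.mem_inf] at hx
    obtain ⟨hxI, hxJ⟩ := hx
    obtain ⟨a, ha, b, hb, rfl⟩ := split I k hk _ hxI
    have haJB : a ∈ Subgroup.closure (ρ '' (J ∪ (I ∩ {i : Fin n | (k : ℕ) < (i : ℕ)}))) := by
      have h' := mul_mem (mono Set.subset_union_left hxJ)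
        (inv_mem (mono Set.subset_union_right hb))
      rwa [mul_inv_cancel_right] at h'
    have hA : ∀ i ∈ I ∩ {i : Fin n | (i : ℕ) < (k : ℕ)}, (i : ℕ) ≤ n - 2 := by
      intro i hi
      have h2 : (i : ℕ) < (k : ℕ) := hi.2
      omega
    have ha2 : a ∈ Subgroup.closure
        (ρ '' ((J ∪ (I ∩ {i : Fin n | (k : ℕ) < (i : ℕ)})) ∩
          (I ∩ {i : Fin n | (i : ℕ) < (k : ℕ)}))) := by
      rw [← goodL _ _ hA]
      exact Subgroup.mem_inf.mpr ⟨haJB, ha⟩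
    have ha3 : a ∈ Subgroup.closure (ρ '' (I ∩ J)) := by
      refine mono ?_ ha2
      rintro i ⟨hiJB, hiI, hilt⟩
      rcases hiJB with hiJ | ⟨-, higt⟩
      · exact ⟨hiI, hiJ⟩
      · have h1 : (i : ℕ) < (k : ℕ) := hilt
        have h2 : (k : ℕ) < (i : ℕ) := higt
        omega
    have hbJ : b ∈ Subgroup.closure (ρ '' J) := by
      have h' := mul_mem (inv_mem (mono Set.inter_subset_right ha3)) hxJ
      rwa [inv_mul_cancel_left] at h'
    have hB1 : ∀ i ∈ I ∩ {i : Fin n | (k : ℕ) < (i : ℕ)}, 1 ≤ (i : ℕ) := by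
      intro i hi
      have h2 : (k : ℕ) < (i : ℕ) := hi.2
      omega
    have hb2 : b ∈ Subgroup.closure
        (ρ '' (J ∩ (I ∩ {i : Fin n | (k : ℕ) < (i : ℕ)}))) := by
      rw [← goodR J _ hB1]
      exact Subgroup.mem_inf.mpr ⟨hbJ, hb⟩
    refine mul_mem ha3 (mono ?_ hb2)
    rintro i ⟨hiJ, hiI, -⟩
    exact ⟨hiI, hiJ⟩
  · push_neg at hIu
    rw [Set.eq_univ_of_forall hIu, Set.univ_inter]
    exact inf_eq_right.mpr (mono (Set.subset_univ _))
end

section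
/- Let (G; {ρ_0, …, ρ_{n−1}}) be a string C-group representation of rank n ≥ 4 that is irreducible, i.e. each product ρ_i ρ_{i+1} (0 ≤ i ≤ n−2) has order at least 3. If ρ_2 ρ_3 has odd order, then (G; {ρ_1, ρ_0ρ_2, ρ_3, ρ_4, …, ρ_{n−1}}) is a string C-group representation of G of rank n−1. (Note that ρ_0ρ_2 is an involution since ρ_0 and ρ_2 commute.) -/
open QuadraticMap

/-!
Write `⟨ρ_S⟩` and `⟨τ_S⟩` (`parabolic ρ S`, `parabolic τ S`) for the subgroups generated by the
old and the new generators with indices in `S`. Every `τ_k` lies in `⟨ρ_{σ k}⟩`, where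
`σ 0 = {1}`, `σ 1 = {0, 2}` and `σ k = {k + 1}` otherwise, so `⟨τ_S⟩ ≤ ⟨ρ_{σ S}⟩`, with
`σ S = reducedSupport S`. Equality holds unless `1 ∈ S` and `2 ∉ S`: if `τ_1 = ρ_0ρ_2` and
`τ_2 = ρ_3` are both available, then `(ρ_0ρ_2ρ_3)^m = ρ_0` for the odd order `m` of `ρ_2ρ_3`.
As `σ` preserves intersections, the intersection property of the `ρ_i` gives that of the `τ_k`
whenever `S ∩ T` is of the first kind.

Otherwise, say `1 ∈ S ∩ T` and `2 ∉ T`. An element of `⟨τ_T⟩` is a product `d e` with `d` in the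
dihedral group `D = ⟨ρ_1, ρ_0ρ_2⟩` and `e` in the commuting subgroup generated by the `ρ_j`,
`j ≥ 4`. The intersection property of the `ρ_i` puts `e` into `⟨τ_{S ∩ T}⟩`, and, unless
`0 ∈ S ∩ T` (when `D ≤ ⟨τ_{S ∩ T}⟩`), puts `d` into `D ∩ ⟨ρ_0, ρ_2⟩`. Irreducibility gives
`D ∩ ⟨ρ_0, ρ_2⟩ = ⟨ρ_0ρ_2⟩`: if `ρ_0 ∈ D`, then either `ρ_0` or `ρ_0 · ρ_0ρ_2 = ρ_2` is a
rotation of `D`, and an involutive rotation commutes with the reflection `ρ_1`.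
-/

open Subgroup

section Involutions

variable {G : Type*} [Group G] {a c g x y : G}

theorem Commute.mul_pow_orderOf_of_odd (h : Commute x y) (hx : x * x = 1)
    (hy : Odd (orderOf y)) : (x * y) ^ orderOf y = x := by
  obtain ⟨k, hk⟩ := hy
  rw [h.mul_pow, pow_orderOf_eq_one, mul_one, hk, pow_succ, pow_mul, pow_two, hx, one_pow, one_mul]

theorem Commute.orderOf_mul_le_two (h : Commute x y) (hx : x * x = 1) (hy : y * y = 1) :
    orderOf (x * y) ≤ 2 :=
  orderOf_le_of_pow_eq_one two_pos <| by rw [h.mul_pow, pow_two, pow_two, hx, hy, one_mul]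

theorem eq_one_or_eq_of_mem_closure_singleton (hx : x * x = 1) (hg : g ∈ closure {x}) :
    g = 1 ∨ g = x := by
  obtain ⟨k, rfl⟩ := mem_closure_singleton.mp hg
  have hx2 : x ^ (2 : ℤ) = 1 := by rw [zpow_two, hx]
  obtain ⟨m, rfl | rfl⟩ := Int.even_or_odd' k
  · left; rw [zpow_mul, hx2, one_zpow]
  · right; rw [zpow_add_one, zpow_mul, hx2, one_zpow, one_mul]

theorem mul_zpow_mul_eq_zpow_neg_mul (ha : a * a = 1) (hc : c * c = 1) (k : ℤ) :
    a * (a * c) ^ k = (a * c) ^ (-k) * a := by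
  have h : a * (a * c) * a⁻¹ = (a * c)⁻¹ := by
    rw [mul_inv_rev, inv_eq_of_mul_eq_one_right ha, inv_eq_of_mul_eq_one_right hc, ← mul_assoc,
      ha, one_mul]
  rw [zpow_neg, ← inv_zpow, ← h, conj_zpow, inv_mul_cancel_right]

theorem exists_zpow_of_mem_closure_pair (ha : a * a = 1) (hc : c * c = 1)
    (hg : g ∈ closure {a, c}) : ∃ k : ℤ, g = (a * c) ^ k ∨ g = (a * c) ^ k * a := by
  have hswap := mul_zpow_mul_eq_zpow_neg_mul ha hc
  have ha' : a⁻¹ = a := inv_eq_of_mul_eq_one_right ha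
  induction hg using closure_induction with
  | mem x hx =>
    rcases hx with rfl | rfl
    · exact ⟨0, Or.inr (by simp)⟩
    · refine ⟨-1, Or.inr ?_⟩
      rw [zpow_neg_one, mul_inv_rev, ha', inv_eq_of_mul_eq_one_right hc, mul_assoc, ha, mul_one]
  | one => exact ⟨0, Or.inl (by simp)⟩
  | mul x y _ _ hx hy =>
    obtain ⟨k, rfl | rfl⟩ := hx <;> obtain ⟨l, rfl | rfl⟩ := hy
    · exact ⟨k + l, Or.inl (by rw [zpow_add])⟩
    · exact ⟨k + l, Or.inr (by rw [zpow_add, mul_assoc])⟩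
    · exact ⟨k - l, Or.inr (by rw [mul_assoc, hswap, ← mul_assoc, ← zpow_add, sub_eq_add_neg])⟩
    · refine ⟨k - l, Or.inl ?_⟩
      rw [mul_assoc, ← mul_assoc a, hswap, mul_assoc, ha, mul_one, ← zpow_add, sub_eq_add_neg]
  | inv x _ hx =>
    obtain ⟨k, rfl | rfl⟩ := hx
    · exact ⟨-k, Or.inl (zpow_neg _ k).symm⟩
    · exact ⟨k, Or.inr (by rw [mul_inv_rev, ha', ← zpow_neg, hswap, neg_neg])⟩

theorem commute_or_commute_mul_of_mem_closure_pair (ha : a * a = 1) (hc : c * c = 1)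
    (hg : g ∈ closure {a, c}) (hg₂ : g * g = 1) (hgc : g * c * (g * c) = 1) :
    Commute a g ∨ Commute a (g * c) := by
  have key : ∀ k : ℤ, (a * c) ^ k * (a * c) ^ k = 1 → Commute a ((a * c) ^ k) := fun k hk => by
    rw [Commute, SemiconjBy, mul_zpow_mul_eq_zpow_neg_mul ha hc, zpow_neg,
      inv_eq_of_mul_eq_one_right hk]
  obtain ⟨k, rfl | rfl⟩ := exists_zpow_of_mem_closure_pair ha hc hg
  · exact Or.inl (key k hg₂)
  · have e : (a * c) ^ k * a * c = (a * c) ^ (k + 1) := by rw [zpow_add_one, mul_assoc]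
    rw [e] at hgc ⊢
    exact Or.inr (key _ hgc)

theorem Subgroup.exists_mul_eq_of_mem_sup_of_le_centralizer {H K : Subgroup G}
    (hHK : H ≤ centralizer K) (hg : g ∈ H ⊔ K) : ∃ h ∈ H, ∃ k ∈ K, h * k = g := by
  rw [← SetLike.mem_coe, coe_mul_of_left_le_normalizer_right H K
    (hHK.trans (centralizer_le_normalizer _))] at hg
  exact hg

end Involutions

section Parabolic

variable {G : Type*} [Group G] {n : ℕ}

def parabolic (ρ : Fin n → G) (S : Set ℕ) : Subgroup G :=
  closure (ρ '' {j | (j : ℕ) ∈ S})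

variable {ρ : Fin n → G} {S T : Set ℕ}

theorem mem_parabolic {j : Fin n} (hj : (j : ℕ) ∈ S) : ρ j ∈ parabolic ρ S :=
  subset_closure ⟨j, hj, rfl⟩

theorem parabolic_le_iff {H : Subgroup G} :
    parabolic ρ S ≤ H ↔ ∀ j : Fin n, (j : ℕ) ∈ S → ρ j ∈ H := by
  simp [parabolic, closure_le, Set.subset_def]

theorem parabolic_mono (h : S ⊆ T) : parabolic ρ S ≤ parabolic ρ T :=
  parabolic_le_iff.mpr fun _ hj => mem_parabolic (h hj)

theorem parabolic_empty : parabolic ρ ∅ = ⊥ := by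
  simp [parabolic]

theorem parabolic_union : parabolic ρ (S ∪ T) = parabolic ρ S ⊔ parabolic ρ T := by
  rw [parabolic, parabolic, parabolic, ← Subgroup.closure_union, ← Set.image_union]
  rfl

theorem parabolic_univ : parabolic ρ Set.univ = closure (Set.range ρ) := by
  simp [parabolic]

theorem closure_image_eq_parabolic (I : Set (Fin n)) :
    closure (ρ '' I) = parabolic ρ (Fin.val '' I) := by
  simp only [parabolic, Fin.val_injective.mem_set_image, Set.ofPred_mem_eq]

theorem parabolic_singleton {i : ℕ} (hi : i < n) : parabolic ρ {i} = closure {ρ ⟨i, hi⟩} := by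
  rw [← Set.image_singleton, closure_image_eq_parabolic, Set.image_singleton]

theorem parabolic_pair {i j : ℕ} (hi : i < n) (hj : j < n) :
    parabolic ρ {i, j} = closure {ρ ⟨i, hi⟩, ρ ⟨j, hj⟩} := by
  rw [← Set.image_pair, closure_image_eq_parabolic, Set.image_pair]

theorem IsStringCSystem.commute (hρ : IsStringCSystem ρ) {i j : Fin n}
    (h : (i : ℕ) + 1 < j) : Commute (ρ i) (ρ j) :=
  hρ.2.1 i j h

theorem IsStringCSystem.parabolic_inf (hρ : IsStringCSystem ρ) (S T : Set ℕ) :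
    parabolic ρ S ⊓ parabolic ρ T = parabolic ρ (S ∩ T) :=
  hρ.2.2 _ _

theorem IsStringCSystem.parabolic_le_centralizer (hρ : IsStringCSystem ρ)
    (h : ∀ i ∈ S, ∀ j ∈ T, i + 1 < j) : parabolic ρ S ≤ centralizer (parabolic ρ T) := by
  rw [parabolic_le_iff]
  intro i hi
  rw [parabolic, centralizer_closure, mem_centralizer_iff]
  rintro _ ⟨j, hj, rfl⟩
  exact (hρ.commute (h _ hi _ hj)).symm

theorem isStringCSystem_of_parabolic_inf_le (hinv : ∀ i, ρ i * ρ i = 1 ∧ ρ i ≠ 1)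
    (hcomm : ∀ i j : Fin n, (i : ℕ) + 1 < j → Commute (ρ i) (ρ j))
    (hinf : ∀ S T : Set ℕ, parabolic ρ S ⊓ parabolic ρ T ≤ parabolic ρ (S ∩ T)) :
    IsStringCSystem ρ := by
  refine ⟨hinv, hcomm, fun I J => ?_⟩
  simp only [closure_image_eq_parabolic, Set.image_inter Fin.val_injective]
  exact le_antisymm (hinf _ _)
    (le_inf (parabolic_mono Set.inter_subset_left) (parabolic_mono Set.inter_subset_right))

end Parabolic

section RankReduction

variable {G : Type*} [Group G] {m : ℕ}

def rankReduction (ρ : Fin (m + 4) → G) (k : Fin (m + 3)) : G :=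
  if (k : ℕ) = 0 then ρ ⟨1, by omega⟩
  else if (k : ℕ) = 1 then ρ ⟨0, by omega⟩ * ρ ⟨2, by omega⟩
  else ρ ⟨(k : ℕ) + 1, by have := k.isLt; omega⟩

def reducedSupport (S : Set ℕ) : Set ℕ :=
  {j | (j = 1 ∧ 0 ∈ S) ∨ ((j = 0 ∨ j = 2) ∧ 1 ∈ S) ∨ (3 ≤ j ∧ j - 1 ∈ S)}

def highIndices (S : Set ℕ) : Set ℕ :=
  {j | 4 ≤ j ∧ j - 1 ∈ S}

theorem reducedSupport_inter (S T : Set ℕ) :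
    reducedSupport (S ∩ T) = reducedSupport S ∩ reducedSupport T := by
  ext j
  simp only [reducedSupport, Set.mem_ofPred_eq, Set.mem_inter_iff]
  grind

theorem reducedSupport_zero_one : reducedSupport {0, 1} = {0, 1, 2} := by
  ext j
  simp [reducedSupport]
  omega

variable {ρ : Fin (m + 4) → G} {S T : Set ℕ}

local notation "τ" => rankReduction ρ
local notation "ρ₀" => ρ ⟨0, by omega⟩
local notation "ρ₁" => ρ ⟨1, by omega⟩
local notation "ρ₂" => ρ ⟨2, by omega⟩
local notation "ρ₃" => ρ ⟨3, by omega⟩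

theorem rankReduction_zero : τ ⟨0, by omega⟩ = ρ₁ := rfl

theorem rankReduction_one : τ ⟨1, by omega⟩ = ρ₀ * ρ₂ := rfl

theorem rankReduction_pred (j : Fin (m + 4)) (hj : 3 ≤ (j : ℕ)) :
    τ ⟨j - 1, by omega⟩ = ρ j := by
  simp only [rankReduction]
  rw [if_neg (by omega), if_neg (by omega)]
  congr
  omega

theorem parabolic_rankReduction_le : parabolic τ S ≤ parabolic ρ (reducedSupport S) := by
  rw [parabolic_le_iff]
  intro k hk
  simp only [rankReduction]
  split_ifs with h0 h1
  · exact mem_parabolic (Or.inl ⟨rfl, h0 ▸ hk⟩)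
  · exact mul_mem (mem_parabolic (Or.inr (Or.inl ⟨Or.inl rfl, h1 ▸ hk⟩)))
      (mem_parabolic (Or.inr (Or.inl ⟨Or.inr rfl, h1 ▸ hk⟩)))
  · exact mem_parabolic (Or.inr (Or.inr ⟨by simp; omega, by simpa using hk⟩))

theorem parabolic_highIndices_le : parabolic ρ (highIndices S) ≤ parabolic τ S := by
  rw [parabolic_le_iff]
  intro j ⟨hj, hjS⟩
  rw [← rankReduction_pred (ρ := ρ) j (by omega)]
  exact mem_parabolic hjS

theorem parabolic_rankReduction_le_sup (h2 : 2 ∉ S) :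
    parabolic τ S ≤ parabolic τ {0, 1} ⊔ parabolic ρ (highIndices S) := by
  rw [parabolic_le_iff]
  intro k hk
  by_cases hk01 : (k : ℕ) = 0 ∨ (k : ℕ) = 1
  · exact mem_sup_left (mem_parabolic hk01)
  · refine mem_sup_right ?_
    have hk3 : 3 ≤ (k : ℕ) := by
      by_contra
      exact h2 (by rwa [show (k : ℕ) = 2 by omega] at hk)
    simp only [rankReduction]
    rw [if_neg (by omega), if_neg (by omega)]
    exact mem_parabolic ⟨by simp; omega, by simpa using hk⟩

theorem rankReduction_mul_self_and_ne_one (hρ : IsStringCSystem ρ) (k : Fin (m + 3)) :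
    τ k * τ k = 1 ∧ τ k ≠ 1 := by
  simp only [rankReduction]
  split_ifs
  · exact hρ.1 _
  · have h02 : Commute ρ₀ ρ₂ := hρ.commute (by simp)
    refine ⟨by rw [h02.symm.mul_mul_mul_comm, (hρ.1 _).1, (hρ.1 _).1, one_mul], fun h => ?_⟩
    have hρ₀ : ρ₀ ∈ parabolic ρ {0} ⊓ parabolic ρ {2} := by
      refine ⟨mem_parabolic rfl, ?_⟩
      rw [eq_inv_of_mul_eq_one_left h, inv_eq_of_mul_eq_one_right (hρ.1 _).1]
      exact mem_parabolic rfl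
    rw [hρ.parabolic_inf, Set.singleton_inter_eq_empty.mpr (by simp), parabolic_empty] at hρ₀
    exact (hρ.1 _).2 hρ₀
  · exact hρ.1 _

theorem rankReduction_commute (hρ : IsStringCSystem ρ) (i j : Fin (m + 3)) (h : (i : ℕ) + 1 < j) :
    Commute (τ i) (τ j) := by
  simp only [rankReduction]
  split_ifs <;> first
    | omega
    | exact hρ.commute (by dsimp only; omega)
    | exact Commute.mul_left (hρ.commute (by dsimp only; omega)) (hρ.commute (by dsimp only; omega))

theorem parabolic_reducedSupport_le (hρ : IsStringCSystem ρ) (hodd : Odd (orderOf (ρ₂ * ρ₃)))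
    (h12 : 1 ∈ S → 2 ∈ S) :
    parabolic ρ (reducedSupport S) ≤ parabolic τ S := by
  rw [parabolic_le_iff]
  rintro j (⟨hj, h0⟩ | ⟨hj, h1⟩ | ⟨hj, hjS⟩)
  · rw [show j = ⟨1, by omega⟩ from Fin.ext hj, ← rankReduction_zero (ρ := ρ)]
    exact mem_parabolic h0
  · have hb : ρ₀ * ρ₂ ∈ parabolic τ S := rankReduction_one (ρ := ρ) ▸ mem_parabolic h1
    have h3 : ρ₃ ∈ parabolic τ S :=
      rankReduction_pred (ρ := ρ) ⟨3, by omega⟩ le_rfl ▸ mem_parabolic (h12 h1)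
    have h0 : ρ₀ ∈ parabolic τ S := by
      have hc : Commute ρ₀ (ρ₂ * ρ₃) := (hρ.commute (by simp)).mul_right (hρ.commute (by simp))
      rw [← hc.mul_pow_orderOf_of_odd (hρ.1 _).1 hodd, ← mul_assoc]
      exact pow_mem (mul_mem hb h3) _
    rcases hj with hj | hj <;> rw [show j = ⟨_, by omega⟩ from Fin.ext hj]
    · exact h0
    · rw [← inv_mul_cancel_left ρ₀ ρ₂, inv_eq_of_mul_eq_one_right (hρ.1 _).1]
      exact mul_mem h0 hb
  · rw [← rankReduction_pred (ρ := ρ) j hj]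
    exact mem_parabolic hjS

theorem notMem_parabolic_rankReduction_zero_one (hρ : IsStringCSystem ρ) (h01 : ¬Commute ρ₀ ρ₁)
    (h12 : ¬Commute ρ₁ ρ₂) : ρ₀ ∉ parabolic τ {0, 1} := by
  intro h
  rw [parabolic_pair (by omega) (by omega), rankReduction_zero, rankReduction_one] at h
  have hρ₂ : ρ₀ * (ρ₀ * ρ₂) = ρ₂ := by rw [← mul_assoc, (hρ.1 _).1, one_mul]
  rcases commute_or_commute_mul_of_mem_closure_pair (c := ρ₀ * ρ₂) (hρ.1 _).1
    (rankReduction_mul_self_and_ne_one hρ ⟨1, by omega⟩).1 h (hρ.1 _).1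
    (by rw [hρ₂]; exact (hρ.1 _).1) with h | h
  · exact h01 h.symm
  · exact h12 (hρ₂ ▸ h)

theorem parabolic_rankReduction_inf_parabolic_le (hρ : IsStringCSystem ρ) (h01 : ¬Commute ρ₀ ρ₁)
    (h12 : ¬Commute ρ₁ ρ₂) : parabolic τ {0, 1} ⊓ parabolic ρ {0, 2} ≤ parabolic τ {1} := by
  rintro g ⟨hgD, hg⟩
  rw [Set.insert_eq, parabolic_union] at hg
  obtain ⟨x, hx, y, hy, rfl⟩ := exists_mul_eq_of_mem_sup_of_le_centralizer
    (hρ.parabolic_le_centralizer (by simp)) hg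
  rw [parabolic_singleton (by omega)] at hx hy
  have hb : ρ₀ * ρ₂ ∈ parabolic τ {0, 1} := mem_parabolic (j := ⟨1, by omega⟩) (by simp)
  have hρ₀ := notMem_parabolic_rankReduction_zero_one hρ h01 h12
  rcases eq_one_or_eq_of_mem_closure_singleton (hρ.1 _).1 hx with rfl | rfl <;>
    rcases eq_one_or_eq_of_mem_closure_singleton (hρ.1 _).1 hy with rfl | rfl
  · simp
  · refine absurd ?_ hρ₀
    rw [← mul_inv_cancel_right ρ₀ ρ₂, inv_eq_of_mul_eq_one_right (hρ.1 _).1]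
    simpa using mul_mem hb hgD
  · exact absurd (by simpa using hgD) hρ₀
  · exact mem_parabolic (j := ⟨1, by omega⟩) rfl

theorem parabolic_rankReduction_inf_le_of_two_notMem (hρ : IsStringCSystem ρ)
    (h01 : ¬Commute ρ₀ ρ₁) (h12 : ¬Commute ρ₁ ρ₂) (h1 : 1 ∈ S ∩ T) (h2 : 2 ∉ T) :
    parabolic τ S ⊓ parabolic τ T ≤ parabolic τ (S ∩ T) := by
  rintro g ⟨hgS, hgT⟩
  have hg : g ∈ parabolic ρ (reducedSupport (S ∩ T)) := by
    rw [reducedSupport_inter, ← hρ.parabolic_inf]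
    exact ⟨parabolic_rankReduction_le hgS, parabolic_rankReduction_le hgT⟩
  have hD : parabolic τ {0, 1} ≤ parabolic ρ {0, 1, 2} :=
    reducedSupport_zero_one ▸ parabolic_rankReduction_le
  have hcent : parabolic τ {0, 1} ≤ centralizer (parabolic ρ (highIndices T)) :=
    hD.trans <| hρ.parabolic_le_centralizer fun i hi j hj => by
      simp only [Set.mem_insert_iff, Set.mem_singleton_iff] at hi
      have := hj.1
      omega
  obtain ⟨d, hd, e, he, rfl⟩ := exists_mul_eq_of_mem_sup_of_le_centralizer hcent
    (parabolic_rankReduction_le_sup h2 hgT)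
  have hd' : d ∈ parabolic ρ ({0, 1, 2} ∩ (reducedSupport (S ∩ T) ∪ highIndices T)) := by
    rw [← hρ.parabolic_inf, parabolic_union]
    exact ⟨hD hd, by simpa using mul_mem_sup hg (inv_mem he)⟩
  have he' : e ∈ parabolic ρ (({0, 1, 2} ∪ reducedSupport (S ∩ T)) ∩ highIndices T) := by
    rw [← hρ.parabolic_inf, parabolic_union]
    exact ⟨by simpa using mul_mem_sup (inv_mem (hD hd)) hg, he⟩
  refine mul_mem ?_ (parabolic_highIndices_le (parabolic_mono ?_ he'))
  · by_cases h0 : 0 ∈ S ∩ T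
    · exact parabolic_mono (Set.insert_subset h0 (Set.singleton_subset_iff.mpr h1)) hd
    · refine parabolic_mono (Set.singleton_subset_iff.mpr h1)
        (parabolic_rankReduction_inf_parabolic_le hρ h01 h12 ⟨hd, parabolic_mono ?_ hd'⟩)
      intro j hj
      simp only [reducedSupport, highIndices, Set.mem_inter_iff, Set.mem_union, Set.mem_ofPred_eq,
        Set.mem_insert_iff, Set.mem_singleton_iff] at hj h0 ⊢
      grind
  · intro j hj
    simp only [reducedSupport, highIndices, Set.mem_inter_iff, Set.mem_union, Set.mem_ofPred_eq,
      Set.mem_insert_iff, Set.mem_singleton_iff] at hj ⊢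
    grind

theorem parabolic_rankReduction_inf_le (hρ : IsStringCSystem ρ) (h01 : ¬Commute ρ₀ ρ₁)
    (h12 : ¬Commute ρ₁ ρ₂) (hodd : Odd (orderOf (ρ₂ * ρ₃))) (S T : Set ℕ) :
    parabolic τ S ⊓ parabolic τ T ≤ parabolic τ (S ∩ T) := by
  by_cases h : 1 ∈ S ∩ T → 2 ∈ S ∩ T
  · calc parabolic τ S ⊓ parabolic τ T
        ≤ parabolic ρ (reducedSupport S) ⊓ parabolic ρ (reducedSupport T) :=
          inf_le_inf parabolic_rankReduction_le parabolic_rankReduction_le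
      _ = parabolic ρ (reducedSupport (S ∩ T)) := by rw [hρ.parabolic_inf, reducedSupport_inter]
      _ ≤ parabolic τ (S ∩ T) := parabolic_reducedSupport_le hρ hodd h
  · push Not at h
    obtain ⟨h1, h2⟩ := h
    by_cases h2T : 2 ∈ T
    · rw [Set.inter_comm] at h1
      rw [inf_comm, Set.inter_comm]
      exact parabolic_rankReduction_inf_le_of_two_notMem hρ h01 h12 h1
        fun h2S => h2 ⟨h2S, h2T⟩
    · exact parabolic_rankReduction_inf_le_of_two_notMem hρ h01 h12 h1 h2T

theorem IsStringCGroupRep.rankReduction (hρ : IsStringCGroupRep ρ) (h01 : ¬Commute ρ₀ ρ₁)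
    (h12 : ¬Commute ρ₁ ρ₂) (hodd : Odd (orderOf (ρ₂ * ρ₃))) : IsStringCGroupRep τ := by
  refine ⟨isStringCSystem_of_parabolic_inf_le (rankReduction_mul_self_and_ne_one hρ.1)
    (rankReduction_commute hρ.1) (parabolic_rankReduction_inf_le hρ.1 h01 h12 hodd), ?_⟩
  rw [eq_top_iff, ← hρ.2, ← parabolic_univ, ← parabolic_univ]
  calc parabolic ρ Set.univ = parabolic ρ (reducedSupport Set.univ) := by
        congr; ext j; simp [reducedSupport]; omega
    _ ≤ parabolic τ Set.univ := parabolic_reducedSupport_le hρ.1 hodd fun _ => trivial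

end RankReduction

/-- Theorem 4.2 (rank reduction): if `(G; {ρ_0,…,ρ_{n-1}})` is an irreducible string
C-group representation of rank `n ≥ 4` and `ρ_2 ρ_3` has odd order, then
`(G; {ρ_1, ρ_0ρ_2, ρ_3, …, ρ_{n-1}})` is a string C-group representation of rank `n - 1`. -/
theorem statement13 {G : Type*} [Group G] (n : ℕ) (hn : 4 ≤ n) (ρ : Fin n → G)
    (hrep : IsStringCGroupRep ρ)
    (hirr : ∀ i j : Fin n, (j : ℕ) = (i : ℕ) + 1 → 3 ≤ orderOf (ρ i * ρ j))
    (hodd : Odd (orderOf (ρ ⟨2, by omega⟩ * ρ ⟨3, by omega⟩))) :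
    IsStringCGroupRep (fun k : Fin (n - 1) =>
      if (k : ℕ) = 0 then ρ ⟨1, by omega⟩
      else if (k : ℕ) = 1 then ρ ⟨0, by omega⟩ * ρ ⟨2, by omega⟩
      else ρ ⟨(k : ℕ) + 1, by have := k.isLt; omega⟩) := by
  obtain ⟨m, rfl⟩ : ∃ m, n = m + 4 := ⟨n - 4, by omega⟩
  have hnc : ∀ i j : Fin (m + 4), (j : ℕ) = i + 1 → ¬Commute (ρ i) (ρ j) := fun i j hij hc => by
    have := hc.orderOf_mul_le_two (hrep.1.1 i).1 (hrep.1.1 j).1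
    have := hirr i j hij
    omega
  exact hrep.rankReduction (hnc _ _ rfl) (hnc _ _ rfl) hodd
end
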